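/- arXiv:2111.07692 — 2 statements merged into one kernel-verified Lean document; each statement's English description precedes it below -/
import Mathlib

section
/- Let (Aₙ)ₙ∈ℤ be a sequence of invertible linear maps on ℝ^M with uniform hyperbolic splitting: projections Pₙ^s, Pₙ^u with Pₙ^s + Pₙ^u = Id, Aₙ Pₙ^s = P_{n+1}^s Aₙ, Aₙ Pₙ^u = P_{n+1}^u Aₙ, and uniform bounds ‖Aₙ₊ₖ₋₁⋯Aₙ Pₙ^s‖ ≤ Cλᵏ, ‖(Aₙ₊ₖ₋₁⋯Aₙ)⁻¹ P_{n+k}^u‖ ≤ Cλᵏ for all k ≥ 0, with 0 < λ < 1. Given a bounded sequence of covectors (ωₙ), the adjoint shadowing equation νₙ = Aₙ* ν_{n+1} + ωₙ has a unique bounded solution, given explicitly by νₙ = Σ_{k≥0} (A_{n+k-1}⋯Aₙ)* (P_{n+k}^s)* ω_{n+k} − Σ_{k≤−1} (A_{n+k}⋯A_{n−1})^{−*} (P_{n+k}^u)* ω_{n+k}. -/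
/-
Split `ω n = ω n ∘ Ps n + ω n ∘ Pu n`. The stable part is pulled back from the future through the
forward products and the unstable part from the past through the inverse products; the
hyperbolicity estimates make both series geometric, hence uniformly bounded, and shifting the
summation index by one gives the adjoint equation. Conversely, a bounded solution `d` of the
homogeneous equation satisfies `d n ∘ Ps n = d (n + k) ∘ (cocycleProd A n k ∘ Ps n)` and
`d n ∘ Pu n = d (n - k) ∘ (cocycleProdInv A (n - k) k ∘ Pu n)`, both `O(λᵏ)`, so `d = 0`.
-/

open scoped BigOperators

/-- Forward cocycle product: `cocycleProd A n k = A (n+k-1) ∘ ⋯ ∘ A n`. -/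
noncomputable def cocycleProd {M : ℕ} (A : ℤ → (EuclideanSpace ℝ (Fin M) ≃L[ℝ] EuclideanSpace ℝ (Fin M))) :
    ℤ → ℕ → (EuclideanSpace ℝ (Fin M) →L[ℝ] EuclideanSpace ℝ (Fin M))
  | _, 0 => ContinuousLinearMap.id ℝ _
  | n, (k+1) => ((A (n + k)) : EuclideanSpace ℝ (Fin M) →L[ℝ] EuclideanSpace ℝ (Fin M)).comp
      (cocycleProd A n k)

/-- Inverse cocycle product: `cocycleProdInv A n k = (A (n+k-1) ∘ ⋯ ∘ A n)⁻¹`. -/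
noncomputable def cocycleProdInv {M : ℕ} (A : ℤ → (EuclideanSpace ℝ (Fin M) ≃L[ℝ] EuclideanSpace ℝ (Fin M))) :
    ℤ → ℕ → (EuclideanSpace ℝ (Fin M) →L[ℝ] EuclideanSpace ℝ (Fin M))
  | _, 0 => ContinuousLinearMap.id ℝ _
  | n, (k+1) => (cocycleProdInv A n k).comp
      (((A (n + k)).symm : EuclideanSpace ℝ (Fin M) →L[ℝ] EuclideanSpace ℝ (Fin M)))

lemma eq_zero_of_norm_le_mul_pow {E : Type*} [NormedAddCommGroup E] {x : E} {c r : ℝ}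
    (hr0 : 0 ≤ r) (hr1 : r < 1) (h : ∀ k : ℕ, ‖x‖ ≤ c * r ^ k) : x = 0 :=
  norm_le_zero_iff.mp <| ge_of_tendsto' (by
    simpa using (tendsto_pow_atTop_nhds_zero_of_lt_one hr0 hr1).const_mul c) h

lemma summable_of_norm_le_geometric {E : Type*} [NormedAddCommGroup E] [CompleteSpace E]
    {f : ℕ → E} {c r : ℝ} (hr : r < 1) (hf : ∀ k, ‖f k‖ ≤ c * r ^ k) : Summable f :=
  summable_iff_cauchySeq_finset.mpr (cauchySeq_finset_of_geometric_bound hr hf)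

lemma norm_tsum_le_of_norm_le_geometric {E : Type*} [NormedAddCommGroup E] [CompleteSpace E]
    {f : ℕ → E} {c r : ℝ} (hr : r < 1) (hf : ∀ k, ‖f k‖ ≤ c * r ^ k) :
    ‖∑' k, f k‖ ≤ c / (1 - r) := by
  simpa using norm_sub_le_of_geometric_bound_of_hasSum hr hf
    (summable_of_norm_le_geometric hr hf).hasSum 0

lemma ContinuousLinearMap.tsum_comp {ι 𝕜 E F G : Type*} [NontriviallyNormedField 𝕜]
    [NormedAddCommGroup E] [NormedSpace 𝕜 E] [NormedAddCommGroup F] [NormedSpace 𝕜 F]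
    [NormedAddCommGroup G] [NormedSpace 𝕜 G] {f : ι → F →L[𝕜] G} (hf : Summable f)
    (L : E →L[𝕜] F) : (∑' k, f k).comp L = ∑' k, (f k).comp L :=
  (ContinuousLinearMap.precomp G L).map_tsum hf

lemma ContinuousLinearMap.opNorm_comp_le_of_le {𝕜 E F G : Type*} [NontriviallyNormedField 𝕜]
    [NormedAddCommGroup E] [NormedSpace 𝕜 E] [NormedAddCommGroup F] [NormedSpace 𝕜 F]
    [NormedAddCommGroup G] [NormedSpace 𝕜 G] {f : F →L[𝕜] G} {g : E →L[𝕜] F} {a b : ℝ}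
    (hf : ‖f‖ ≤ a) (hg : ‖g‖ ≤ b) : ‖f.comp g‖ ≤ a * b :=
  (f.opNorm_comp_le g).trans (mul_le_mul hf hg (norm_nonneg g) ((norm_nonneg f).trans hf))

lemma ContinuousLinearEquiv.comp_symm_eq_of_comp_eq {𝕜 E F : Type*} [NontriviallyNormedField 𝕜]
    [NormedAddCommGroup E] [NormedSpace 𝕜 E] [NormedAddCommGroup F] [NormedSpace 𝕜 F]
    (e : E ≃L[𝕜] F) {P : E →L[𝕜] E} {Q : F →L[𝕜] F}
    (h : (e : E →L[𝕜] F).comp P = Q.comp (e : E →L[𝕜] F)) :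
    P.comp (e.symm : F →L[𝕜] E) = (e.symm : F →L[𝕜] E).comp Q := by
  ext x
  simpa using congrArg e.symm (DFunLike.congr_fun h (e.symm x))

section Cocycle

variable {M : ℕ} (A : ℤ → (EuclideanSpace ℝ (Fin M) ≃L[ℝ] EuclideanSpace ℝ (Fin M)))

lemma cocycleProd_succ' (n : ℤ) (k : ℕ) :
    cocycleProd A n (k + 1) = (cocycleProd A (n + 1) k).comp (A n : _ →L[ℝ] _) := by
  induction k with
  | zero => simp [cocycleProd]
  | succ k ih =>
    rw [cocycleProd, ih, cocycleProd, ContinuousLinearMap.comp_assoc]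
    congr 3
    push_cast
    ring

lemma cocycleProd_comp_cocycleProdInv (n : ℤ) (k : ℕ) :
    (cocycleProd A n k).comp (cocycleProdInv A n k) = ContinuousLinearMap.id ℝ _ := by
  induction k with
  | zero => rfl
  | succ k ih =>
    rw [cocycleProd, cocycleProdInv, ContinuousLinearMap.comp_assoc,
      ← ContinuousLinearMap.comp_assoc (cocycleProd A n k), ih,
      ContinuousLinearMap.id_comp, ContinuousLinearEquiv.coe_comp_coe_symm]

lemma cocycleProdInv_succ_comp (n : ℤ) (k : ℕ) :
    (cocycleProdInv A n (k + 1)).comp (A (n + k) : _ →L[ℝ] _) = cocycleProdInv A n k := by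
  rw [cocycleProdInv, ContinuousLinearMap.comp_assoc, ContinuousLinearEquiv.coe_symm_comp_coe,
    ContinuousLinearMap.comp_id]

variable {A} {P : ℤ → (EuclideanSpace ℝ (Fin M) →L[ℝ] EuclideanSpace ℝ (Fin M))}
  (hP : ∀ n, (A n : _ →L[ℝ] _).comp (P n) = (P (n + 1)).comp (A n : _ →L[ℝ] _))
include hP

lemma comp_cocycleProd_of_comp_eq (n : ℤ) (k : ℕ) :
    (P (n + k)).comp (cocycleProd A n k) = (cocycleProd A n k).comp (P n) := by
  induction k with
  | zero => simp [cocycleProd]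
  | succ k ih =>
    rw [cocycleProd, Nat.cast_succ, ← add_assoc, ← ContinuousLinearMap.comp_assoc, ← hP,
      ContinuousLinearMap.comp_assoc, ih, ← ContinuousLinearMap.comp_assoc]

lemma comp_cocycleProdInv_of_comp_eq (n : ℤ) (k : ℕ) :
    (P n).comp (cocycleProdInv A n k) = (cocycleProdInv A n k).comp (P (n + k)) := by
  induction k with
  | zero => simp [cocycleProdInv]
  | succ k ih =>
    rw [cocycleProdInv, Nat.cast_succ, ← add_assoc, ← ContinuousLinearMap.comp_assoc, ih,
      ContinuousLinearMap.comp_assoc, (A (n + k)).comp_symm_eq_of_comp_eq (hP (n + k)),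
      ← ContinuousLinearMap.comp_assoc]

end Cocycle

section AdjointShadowing

variable {M : ℕ} (A : ℤ → (EuclideanSpace ℝ (Fin M) ≃L[ℝ] EuclideanSpace ℝ (Fin M)))
  (Ps Pu : ℤ → (EuclideanSpace ℝ (Fin M) →L[ℝ] EuclideanSpace ℝ (Fin M)))
  (ω : ℤ → (EuclideanSpace ℝ (Fin M) →L[ℝ] ℝ))

noncomputable def stableTerm (n : ℤ) (k : ℕ) : EuclideanSpace ℝ (Fin M) →L[ℝ] ℝ :=
  ((ω (n + k)).comp (Ps (n + k))).comp (cocycleProd A n k)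

noncomputable def unstableTerm (n : ℤ) (k : ℕ) : EuclideanSpace ℝ (Fin M) →L[ℝ] ℝ :=
  ((ω (n - k)).comp (Pu (n - k))).comp (cocycleProdInv A (n - k) k)

/-- `unstableTerm A Pu ω n j` is the paper's term of index `k = -j`, so the unstable series runs
over `j ≥ 1`. -/
noncomputable def adjointShadow (n : ℤ) : EuclideanSpace ℝ (Fin M) →L[ℝ] ℝ :=
  ∑' k, stableTerm A Ps ω n k - ∑' k, unstableTerm A Pu ω n (k + 1)

lemma stableTerm_zero (n : ℤ) : stableTerm A Ps ω n 0 = (ω n).comp (Ps n) := by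
  simp [stableTerm, cocycleProd]

lemma stableTerm_succ (n : ℤ) (k : ℕ) :
    stableTerm A Ps ω n (k + 1) = (stableTerm A Ps ω (n + 1) k).comp (A n : _ →L[ℝ] _) := by
  rw [stableTerm, stableTerm, cocycleProd_succ', ← ContinuousLinearMap.comp_assoc, Nat.cast_succ,
    add_comm (k : ℤ) 1, ← add_assoc]

lemma unstableTerm_zero (n : ℤ) : unstableTerm A Pu ω n 0 = (ω n).comp (Pu n) := by
  simp [unstableTerm, cocycleProdInv]

lemma unstableTerm_succ_comp (n : ℤ) (k : ℕ) :
    (unstableTerm A Pu ω (n + 1) (k + 1)).comp (A n : _ →L[ℝ] _) = unstableTerm A Pu ω n k := by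
  have hshift : n + 1 - ((k + 1 : ℕ) : ℤ) = n - k := by push_cast; ring
  have hA := cocycleProdInv_succ_comp A (n - k) k
  rw [sub_add_cancel] at hA
  rw [unstableTerm, unstableTerm, hshift, ContinuousLinearMap.comp_assoc, hA]

variable {A Ps Pu ω}

lemma tsum_stableTerm (hS : ∀ n, Summable (stableTerm A Ps ω n)) (n : ℤ) :
    ∑' k, stableTerm A Ps ω n k
      = (ω n).comp (Ps n) + (∑' k, stableTerm A Ps ω (n + 1) k).comp (A n : _ →L[ℝ] _) := by
  rw [(hS n).tsum_eq_zero_add, stableTerm_zero, ContinuousLinearMap.tsum_comp (hS (n + 1))]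
  simp only [stableTerm_succ]

lemma tsum_unstableTerm_comp (hU : ∀ n, Summable (unstableTerm A Pu ω n)) (n : ℤ) :
    (∑' k, unstableTerm A Pu ω (n + 1) (k + 1)).comp (A n : _ →L[ℝ] _)
      = (ω n).comp (Pu n) + ∑' k, unstableTerm A Pu ω n (k + 1) := by
  have hU' := (summable_nat_add_iff (f := unstableTerm A Pu ω (n + 1)) 1).mpr (hU (n + 1))
  rw [ContinuousLinearMap.tsum_comp hU']
  simp only [unstableTerm_succ_comp]
  rw [(hU n).tsum_eq_zero_add, unstableTerm_zero]

lemma adjointShadow_eq (hsum : ∀ n, Ps n + Pu n = ContinuousLinearMap.id ℝ _)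
    (hS : ∀ n, Summable (stableTerm A Ps ω n)) (hU : ∀ n, Summable (unstableTerm A Pu ω n))
    (n : ℤ) :
    adjointShadow A Ps Pu ω n
      = (adjointShadow A Ps Pu ω (n + 1)).comp (A n : _ →L[ℝ] _) + ω n := by
  have hsplit : (ω n).comp (Ps n) + (ω n).comp (Pu n) = ω n := by
    rw [← ContinuousLinearMap.comp_add, hsum, ContinuousLinearMap.comp_id]
  rw [adjointShadow, adjointShadow, ContinuousLinearMap.sub_comp, tsum_stableTerm hS,
    tsum_unstableTerm_comp hU]
  nth_rewrite 3 [← hsplit]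
  abel

variable {C lam K : ℝ}

lemma norm_stableTerm_le
    (hints : ∀ n, (A n : _ →L[ℝ] _).comp (Ps n) = (Ps (n + 1)).comp (A n : _ →L[ℝ] _))
    (hstab : ∀ (n : ℤ) (k : ℕ), ‖(cocycleProd A n k).comp (Ps n)‖ ≤ C * lam ^ k)
    (hω : ∀ n, ‖ω n‖ ≤ K) (n : ℤ) (k : ℕ) :
    ‖stableTerm A Ps ω n k‖ ≤ K * C * lam ^ k := by
  have hcomm : stableTerm A Ps ω n k = (ω (n + k)).comp ((cocycleProd A n k).comp (Ps n)) := by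
    rw [stableTerm, ContinuousLinearMap.comp_assoc, comp_cocycleProd_of_comp_eq hints]
  rw [hcomm, mul_assoc]
  exact ContinuousLinearMap.opNorm_comp_le_of_le (hω _) (hstab n k)

lemma norm_unstableTerm_le
    (hintu : ∀ n, (A n : _ →L[ℝ] _).comp (Pu n) = (Pu (n + 1)).comp (A n : _ →L[ℝ] _))
    (hunst : ∀ (n : ℤ) (k : ℕ), ‖(cocycleProdInv A n k).comp (Pu (n + k))‖ ≤ C * lam ^ k)
    (hω : ∀ n, ‖ω n‖ ≤ K) (n : ℤ) (k : ℕ) :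
    ‖unstableTerm A Pu ω n k‖ ≤ K * C * lam ^ k := by
  have hcomm : unstableTerm A Pu ω n k
      = (ω (n - k)).comp ((cocycleProdInv A (n - k) k).comp (Pu (n - k + k))) := by
    rw [unstableTerm, ContinuousLinearMap.comp_assoc, comp_cocycleProdInv_of_comp_eq hintu]
  rw [hcomm, mul_assoc]
  exact ContinuousLinearMap.opNorm_comp_le_of_le (hω _) (hunst (n - k) k)

lemma norm_adjointShadow_le (hlam : lam < 1)
    (hS : ∀ n k, ‖stableTerm A Ps ω n k‖ ≤ K * C * lam ^ k)
    (hU : ∀ n k, ‖unstableTerm A Pu ω n k‖ ≤ K * C * lam ^ k) (n : ℤ) :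
    ‖adjointShadow A Ps Pu ω n‖ ≤ K * C / (1 - lam) + K * C * lam / (1 - lam) := by
  have hU' : ∀ k : ℕ, ‖unstableTerm A Pu ω n (k + 1)‖ ≤ K * C * lam * lam ^ k := fun k =>
    (hU n (k + 1)).trans_eq (by ring)
  exact (norm_sub_le _ _).trans (add_le_add (norm_tsum_le_of_norm_le_geometric hlam (hS n))
    (norm_tsum_le_of_norm_le_geometric hlam hU'))

end AdjointShadowing

section Uniqueness

variable {M : ℕ} {A : ℤ → (EuclideanSpace ℝ (Fin M) ≃L[ℝ] EuclideanSpace ℝ (Fin M))}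
  {d : ℤ → (EuclideanSpace ℝ (Fin M) →L[ℝ] ℝ)}

lemma eq_comp_cocycleProd_of_eq_comp (hd : ∀ n, d n = (d (n + 1)).comp (A n : _ →L[ℝ] _))
    (n : ℤ) (k : ℕ) : d n = (d (n + k)).comp (cocycleProd A n k) := by
  induction k with
  | zero => simp [cocycleProd]
  | succ k ih =>
    rw [ih, hd (n + k), cocycleProd, Nat.cast_succ, ← add_assoc, ContinuousLinearMap.comp_assoc]

lemma eq_zero_of_bounded_of_eq_comp
    {Ps Pu : ℤ → (EuclideanSpace ℝ (Fin M) →L[ℝ] EuclideanSpace ℝ (Fin M))} {C lam K : ℝ}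
    (hsum : ∀ n, Ps n + Pu n = ContinuousLinearMap.id ℝ _) (hlam0 : 0 ≤ lam) (hlam1 : lam < 1)
    (hstab : ∀ (n : ℤ) (k : ℕ), ‖(cocycleProd A n k).comp (Ps n)‖ ≤ C * lam ^ k)
    (hunst : ∀ (n : ℤ) (k : ℕ), ‖(cocycleProdInv A n k).comp (Pu (n + k))‖ ≤ C * lam ^ k)
    (hbdd : ∀ n, ‖d n‖ ≤ K) (hd : ∀ n, d n = (d (n + 1)).comp (A n : _ →L[ℝ] _)) : d = 0 := by
  funext n
  have hs : (d n).comp (Ps n) = 0 := eq_zero_of_norm_le_mul_pow hlam0 hlam1 fun k => by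
    rw [eq_comp_cocycleProd_of_eq_comp hd n k, ContinuousLinearMap.comp_assoc, mul_assoc]
    exact ContinuousLinearMap.opNorm_comp_le_of_le (hbdd _) (hstab n k)
  have hu : (d n).comp (Pu n) = 0 := eq_zero_of_norm_le_mul_pow hlam0 hlam1 fun k => by
    have hback : d (n - k) = (d n).comp (cocycleProd A (n - k) k) := by
      simpa using eq_comp_cocycleProd_of_eq_comp hd (n - k) k
    have hpull : (d n).comp (Pu n)
        = (d (n - k)).comp ((cocycleProdInv A (n - k) k).comp (Pu (n - k + k))) := by
      rw [sub_add_cancel, hback, ContinuousLinearMap.comp_assoc,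
        ← ContinuousLinearMap.comp_assoc (cocycleProd A (n - k) k),
        cocycleProd_comp_cocycleProdInv, ContinuousLinearMap.id_comp]
    rw [hpull, mul_assoc]
    exact ContinuousLinearMap.opNorm_comp_le_of_le (hbdd _) (hunst (n - k) k)
  rw [Pi.zero_apply, ← (d n).comp_id, ← hsum n, ContinuousLinearMap.comp_add, hs, hu, add_zero]

end Uniqueness

theorem stmt_2_general (M : ℕ)
    (A : ℤ → (EuclideanSpace ℝ (Fin M) ≃L[ℝ] EuclideanSpace ℝ (Fin M)))
    (Ps Pu : ℤ → (EuclideanSpace ℝ (Fin M) →L[ℝ] EuclideanSpace ℝ (Fin M)))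
    (hsum : ∀ n, Ps n + Pu n = ContinuousLinearMap.id ℝ _)
    (hints : ∀ n, ((A n : EuclideanSpace ℝ (Fin M) →L[ℝ] _).comp (Ps n))
      = (Ps (n+1)).comp (A n : EuclideanSpace ℝ (Fin M) →L[ℝ] _))
    (hintu : ∀ n, ((A n : EuclideanSpace ℝ (Fin M) →L[ℝ] _).comp (Pu n))
      = (Pu (n+1)).comp (A n : EuclideanSpace ℝ (Fin M) →L[ℝ] _))
    (C lam : ℝ) (hlam0 : 0 < lam) (hlam1 : lam < 1)
    (hstab : ∀ (n : ℤ) (k : ℕ), ‖(cocycleProd A n k).comp (Ps n)‖ ≤ C * lam ^ k)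
    (hunst : ∀ (n : ℤ) (k : ℕ), ‖(cocycleProdInv A n k).comp (Pu (n + k))‖ ≤ C * lam ^ k)
    (ω : ℤ → (EuclideanSpace ℝ (Fin M) →L[ℝ] ℝ))
    (hω : ∃ Kω, ∀ n, ‖ω n‖ ≤ Kω) :
    ∃ ν : ℤ → (EuclideanSpace ℝ (Fin M) →L[ℝ] ℝ),
      ((∃ K, ∀ n, ‖ν n‖ ≤ K) ∧
        (∀ n, ν n = (ν (n+1)).comp (A n : EuclideanSpace ℝ (Fin M) →L[ℝ] _) + ω n)) ∧
      (∀ ν' : ℤ → (EuclideanSpace ℝ (Fin M) →L[ℝ] ℝ),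
        ((∃ K, ∀ n, ‖ν' n‖ ≤ K) ∧
          (∀ n, ν' n = (ν' (n+1)).comp (A n : EuclideanSpace ℝ (Fin M) →L[ℝ] _) + ω n))
        → ν' = ν) ∧
      (∀ n, ν n =
        (∑' k : ℕ, ((ω (n + k)).comp (Ps (n + k))).comp (cocycleProd A n k))
        - (∑' k : ℕ, ((ω (n - (k+1))).comp (Pu (n - (k+1)))).comp
            (cocycleProdInv A (n - (k+1)) (k+1)))) := by
  obtain ⟨Kω, hKω⟩ := hω
  have hS := norm_stableTerm_le hints hstab hKω
  have hU := norm_unstableTerm_le hintu hunst hKω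
  have hbdd := norm_adjointShadow_le hlam1 hS hU
  have hν := adjointShadow_eq hsum (fun n => summable_of_norm_le_geometric hlam1 (hS n))
    (fun n => summable_of_norm_le_geometric hlam1 (hU n))
  refine ⟨adjointShadow A Ps Pu ω, ⟨⟨_, hbdd⟩, hν⟩, ?_, fun n => ?_⟩
  · rintro ν' ⟨⟨K, hK⟩, hν'⟩
    refine sub_eq_zero.mp (eq_zero_of_bounded_of_eq_comp hsum hlam0.le hlam1 hstab hunst
      (fun n => (norm_sub_le _ _).trans (add_le_add (hK n) (hbdd n))) fun n => ?_)
    rw [Pi.sub_apply, Pi.sub_apply, hν' n, hν n, ContinuousLinearMap.sub_comp]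
    abel
  · simp only [adjointShadow, stableTerm, unstableTerm]
    push_cast
    rfl

/-- adjoint shadowing lemma for a uniformly hyperbolic sequence of
invertible linear maps: the adjoint shadowing equation `ν n = (A n)* ν (n+1) + ω n`
has a unique bounded solution, given by the explicit split-propagate expansion. -/
theorem stmt_2 (M : ℕ)
    (A : ℤ → (EuclideanSpace ℝ (Fin M) ≃L[ℝ] EuclideanSpace ℝ (Fin M)))
    (Ps Pu : ℤ → (EuclideanSpace ℝ (Fin M) →L[ℝ] EuclideanSpace ℝ (Fin M)))
    (hsum : ∀ n, Ps n + Pu n = ContinuousLinearMap.id ℝ _)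
    (hints : ∀ n, ((A n : EuclideanSpace ℝ (Fin M) →L[ℝ] _).comp (Ps n))
      = (Ps (n+1)).comp (A n : EuclideanSpace ℝ (Fin M) →L[ℝ] _))
    (hintu : ∀ n, ((A n : EuclideanSpace ℝ (Fin M) →L[ℝ] _).comp (Pu n))
      = (Pu (n+1)).comp (A n : EuclideanSpace ℝ (Fin M) →L[ℝ] _))
    (C lam : ℝ) (hC : 0 < C) (hlam0 : 0 < lam) (hlam1 : lam < 1)
    (hstab : ∀ (n : ℤ) (k : ℕ), ‖(cocycleProd A n k).comp (Ps n)‖ ≤ C * lam ^ k)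
    (hunst : ∀ (n : ℤ) (k : ℕ), ‖(cocycleProdInv A n k).comp (Pu (n + k))‖ ≤ C * lam ^ k)
    (ω : ℤ → (EuclideanSpace ℝ (Fin M) →L[ℝ] ℝ))
    (hω : ∃ Kω, ∀ n, ‖ω n‖ ≤ Kω) :
    ∃ ν : ℤ → (EuclideanSpace ℝ (Fin M) →L[ℝ] ℝ),
      ((∃ K, ∀ n, ‖ν n‖ ≤ K) ∧
        (∀ n, ν n = (ν (n+1)).comp (A n : EuclideanSpace ℝ (Fin M) →L[ℝ] _) + ω n)) ∧
      (∀ ν' : ℤ → (EuclideanSpace ℝ (Fin M) →L[ℝ] ℝ),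
        ((∃ K, ∀ n, ‖ν' n‖ ≤ K) ∧
          (∀ n, ν' n = (ν' (n+1)).comp (A n : EuclideanSpace ℝ (Fin M) →L[ℝ] _) + ω n))
        → ν' = ν) ∧
      (∀ n, ν n =
        (∑' k : ℕ, ((ω (n + k)).comp (Ps (n + k))).comp (cocycleProd A n k))
        - (∑' k : ℕ, ((ω (n - (k+1))).comp (Pu (n - (k+1)))).comp
            (cocycleProdInv A (n - (k+1)) (k+1)))) :=
  stmt_2_general M A Ps Pu hsum hints hintu C lam hlam0 hlam1 hstab hunst ω hω
end

section
/- In the setting of a uniformly hyperbolic sequence of invertible linear maps (Aₙ) on ℝ^M with bounded splitting projections, the homogeneous adjoint equation νₙ = Aₙ* ν_{n+1} has no nonzero bounded solution on ℤ. Consequently, the bounded solution of the inhomogeneous adjoint equation νₙ = Aₙ* ν_{n+1} + ωₙ, if it exists, is unique. -/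
/-- for a uniformly hyperbolic cocycle the homogeneous adjoint
equation has no nonzero bounded solution, hence bounded solutions of the
inhomogeneous adjoint equation are unique. -/
theorem stmt_3 (M : ℕ)
    (A : ℤ → (EuclideanSpace ℝ (Fin M) ≃L[ℝ] EuclideanSpace ℝ (Fin M)))
    (Ps Pu : ℤ → (EuclideanSpace ℝ (Fin M) →L[ℝ] EuclideanSpace ℝ (Fin M)))
    (hsum : ∀ n, Ps n + Pu n = ContinuousLinearMap.id ℝ _)
    (hints : ∀ n, ((A n : EuclideanSpace ℝ (Fin M) →L[ℝ] _).comp (Ps n))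
      = (Ps (n+1)).comp (A n : EuclideanSpace ℝ (Fin M) →L[ℝ] _))
    (hintu : ∀ n, ((A n : EuclideanSpace ℝ (Fin M) →L[ℝ] _).comp (Pu n))
      = (Pu (n+1)).comp (A n : EuclideanSpace ℝ (Fin M) →L[ℝ] _))
    (C lam : ℝ) (hC : 0 < C) (hlam0 : 0 < lam) (hlam1 : lam < 1)
    (hstab : ∀ (n : ℤ) (k : ℕ), ‖(cocycleProd A n k).comp (Ps n)‖ ≤ C * lam ^ k)
    (hunst : ∀ (n : ℤ) (k : ℕ), ‖(cocycleProdInv A n k).comp (Pu (n + k))‖ ≤ C * lam ^ k) :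
    (∀ ν : ℤ → (EuclideanSpace ℝ (Fin M) →L[ℝ] ℝ),
      (∃ K, ∀ n, ‖ν n‖ ≤ K) →
      (∀ n, ν n = (ν (n+1)).comp (A n : EuclideanSpace ℝ (Fin M) →L[ℝ] _)) →
      ∀ n, ν n = 0) ∧
    (∀ (ω ν₁ ν₂ : ℤ → (EuclideanSpace ℝ (Fin M) →L[ℝ] ℝ)),
      (∃ K, ∀ n, ‖ν₁ n‖ ≤ K) → (∃ K, ∀ n, ‖ν₂ n‖ ≤ K) →
      (∀ n, ν₁ n = (ν₁ (n+1)).comp (A n : EuclideanSpace ℝ (Fin M) →L[ℝ] _) + ω n) →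
      (∀ n, ν₂ n = (ν₂ (n+1)).comp (A n : EuclideanSpace ℝ (Fin M) →L[ℝ] _) + ω n) →
      ν₁ = ν₂) := by

  classical
  have hinv : ∀ (m : ℤ) (k : ℕ),
      (cocycleProd A m k).comp (cocycleProdInv A m k) = ContinuousLinearMap.id ℝ _ := by
    intro m k
    induction k with
    | zero => simp [cocycleProd, cocycleProdInv]
    | succ k ih =>
      rw [cocycleProd, cocycleProdInv, ContinuousLinearMap.comp_assoc,
        ← ContinuousLinearMap.comp_assoc (cocycleProd A m k), ih,
        ContinuousLinearMap.id_comp]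
      ext x
      simp
  have key : ∀ ν : ℤ → (EuclideanSpace ℝ (Fin M) →L[ℝ] ℝ),
      (∃ K, ∀ n, ‖ν n‖ ≤ K) →
      (∀ n, ν n = (ν (n+1)).comp (A n : EuclideanSpace ℝ (Fin M) →L[ℝ] _)) →
      ∀ n, ν n = 0 := by
    rintro ν ⟨K, hK⟩ hrec n
    have hK0 : 0 ≤ K := le_trans (norm_nonneg _) (hK 0)
    have hiter : ∀ (m : ℤ) (k : ℕ), ν m = (ν (m + k)).comp (cocycleProd A m k) := by
      intro m k
      induction k with
      | zero => simp [cocycleProd]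
      | succ k ih =>
        have e : m + ((k : ℤ) + 1) = (m + k) + 1 := by ring
        rw [cocycleProd]
        push_cast
        rw [e, ← ContinuousLinearMap.comp_assoc, ← hrec (m + k), ← ih]
    have hlim : Filter.Tendsto (fun k : ℕ => K * (C * lam ^ k)) Filter.atTop (nhds 0) := by
      have : Filter.Tendsto (fun k : ℕ => lam ^ k) Filter.atTop (nhds 0) :=
        tendsto_pow_atTop_nhds_zero_of_lt_one hlam0.le hlam1
      have := ((this.const_mul C).const_mul K)
      simpa using this
    have hzero : ∀ f : EuclideanSpace ℝ (Fin M) →L[ℝ] ℝ,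
        (∀ k : ℕ, ‖f‖ ≤ K * (C * lam ^ k)) → f = 0 := by
      intro f hf
      have : ‖f‖ ≤ 0 :=
        le_of_tendsto_of_tendsto tendsto_const_nhds hlim (Filter.Eventually.of_forall hf)
      simpa using le_antisymm this (norm_nonneg f)
    have hs : (ν n).comp (Ps n) = 0 := by
      apply hzero
      intro k
      rw [hiter n k, ContinuousLinearMap.comp_assoc]
      calc ‖(ν (n + k)).comp ((cocycleProd A n k).comp (Ps n))‖
          ≤ ‖ν (n + k)‖ * ‖(cocycleProd A n k).comp (Ps n)‖ :=
            ContinuousLinearMap.opNorm_comp_le _ _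
        _ ≤ K * (C * lam ^ k) := by
            apply mul_le_mul (hK _) (hstab n k) (norm_nonneg _) hK0
    have hu : (ν n).comp (Pu n) = 0 := by
      apply hzero
      intro k
      have e1 : (n - k) + (k : ℤ) = n := by ring
      have h1 : (ν n).comp (Pu n)
          = (ν (n - k)).comp ((cocycleProdInv A (n - k) k).comp (Pu n)) := by
        have h2 := hiter (n - k) k
        rw [e1] at h2
        rw [← ContinuousLinearMap.comp_assoc, h2,
          ContinuousLinearMap.comp_assoc (ν n), hinv, ContinuousLinearMap.comp_id]
      rw [h1]
      have h3 := hunst (n - k) k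
      rw [e1] at h3
      calc ‖(ν (n - k)).comp ((cocycleProdInv A (n - k) k).comp (Pu n))‖
          ≤ ‖ν (n - k)‖ * ‖(cocycleProdInv A (n - k) k).comp (Pu n)‖ :=
            ContinuousLinearMap.opNorm_comp_le _ _
        _ ≤ K * (C * lam ^ k) := mul_le_mul (hK _) h3 (norm_nonneg _) hK0
    have : ν n = (ν n).comp (Ps n) + (ν n).comp (Pu n) := by
      rw [← ContinuousLinearMap.comp_add, hsum n]
      ext x; simp
    rw [this, hs, hu, add_zero]
  refine ⟨key, ?_⟩
  rintro ω ν₁ ν₂ ⟨K₁, hK₁⟩ ⟨K₂, hK₂⟩ h₁ h₂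
  have := key (fun n => ν₁ n - ν₂ n) ⟨K₁ + K₂, fun n => by
      calc ‖ν₁ n - ν₂ n‖ ≤ ‖ν₁ n‖ + ‖ν₂ n‖ := norm_sub_le _ _
        _ ≤ K₁ + K₂ := add_le_add (hK₁ n) (hK₂ n)⟩
    (fun n => by
      simp only []
      rw [h₁ n, h₂ n, ContinuousLinearMap.sub_comp]
      abel)
  funext n
  have hn := this n
  simpa [sub_eq_zero] using hn
end
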